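/- (Lemma 1, matrix form.) Let n, r ≥ 2, p, q ≥ 1, and m = n + r − 2. Let E ∈ ℝ^{n×n}, Ê ∈ ℝ^{r×r} be diagonal positive definite; let L ∈ ℝ^{n×n}, L̂ ∈ ℝ^{r×r} satisfy L1_n = 0, 1_nᵀL = 0, L̂1_r = 0, 1_rᵀL̂ = 0; let F ∈ ℝ^{n×p}, H ∈ ℝ^{q×n}; let Π ∈ ℝ^{n×r} satisfy Π1_r = 1_n, and set F̂ = ΠᵀF, Ĥ = HΠ. Suppose α, β ∈ ℝ satisfy αβ = trace(Ê)/trace(E). Define A_e = blockdiag(−E^{−1}L, −Ê^{−1}L̂), B_e = [E^{−1}F ; βÊ^{−1}F̂], C_e = [H , −αĤ], and, with Sₙ, Sₙᴸ, S_r, S_rᴸ as in the paper, Ā_e = blockdiag(−SₙᴸLE^{−1}Sₙ, −S_rᴸL̂Ê^{−1}S_r), B̄_e = [SₙᴸF ; βS_rᴸF̂], C̄_e = [HE^{−1}Sₙ , −αĤÊ^{−1}S_r]. Then for every complex s with s ≠ 0 and sI_m − Ā_e invertible, C_e (sI_{n+r} − A_e)^{−1} B_e = C̄_e (sI_m − Ā_e)^{−1}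 B̄_e; that is, the pole of the error transfer function at s = 0 cancels. -/

import Mathlib

/-!
Put `T = blockdiag(E⁻¹Sₙ, Ê⁻¹S_r)`, `Tᴸ = blockdiag(SₙᴸE, S_rᴸÊ)` and let `Q` be the
block-diagonal projection `x ↦ (1ᵀEx / trace E) 1` onto the consensus directions. Then
`T Tᴸ + Q = 1`, and `L1 = 0`, `1ᵀL = 0` make `Q` annihilate `A_e` from both sides, so
`(sI − A_e)⁻¹ = s⁻¹ Q + T (sI − Ā_e)⁻¹ Tᴸ` with `Ā_e = Tᴸ A_e T`. The error transfer
function is therefore the reduced one plus `s⁻¹ C_e Q B_e`, and since `Π1 = 1` this residue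
equals `(1 / trace E − αβ / trace Ê) H 1 1ᵀ F`, which vanishes when `αβ = trace Ê / trace E`.
-/

open Matrix

/-- The all-ones column vector of length `k`, as a `k × 1` matrix. -/
def onesCol (k : ℕ) : Matrix (Fin k) (Fin 1) ℝ := Matrix.of fun _ _ => 1

/-- The matrix `Sₙ = [−I_{n−1}; 1_{n−1}ᵀ] ∈ ℝ^{n×(n−1)}`, with `n = m + 1`. -/
def Sn (m : ℕ) : Matrix (Fin (m + 1)) (Fin m) ℝ :=
  Matrix.of fun i j => if (i : ℕ) = m then 1 else if (i : ℕ) = (j : ℕ) then -1 else 0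

/-- The weighted left inverse `Sₙᴸ = (Sₙᵀ E⁻¹ Sₙ)⁻¹ Sₙᵀ E⁻¹`. -/
noncomputable def SnL (m : ℕ) (E : Matrix (Fin (m + 1)) (Fin (m + 1)) ℝ) :
    Matrix (Fin m) (Fin (m + 1)) ℝ :=
  ((Sn m)ᵀ * E⁻¹ * Sn m)⁻¹ * (Sn m)ᵀ * E⁻¹

/-- Entrywise complexification of a real matrix. -/
def cmap {α β : Type*} (A : Matrix α β ℝ) : Matrix α β ℂ := A.map fun x => (x : ℂ)

section Resolvent

variable {K : Type*} [Field K] {n m : Type*} [Fintype n] [DecidableEq n] [Fintype m]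
  [DecidableEq m] {A Q : Matrix n n K} {T : Matrix n m K} {TL : Matrix m n K}

theorem resolvent_eq_of_mul_add_eq_one (hsplit : T * TL + Q = 1) (hAQ : A * Q = 0)
    (hQA : Q * A = 0) {s : K} (hs : s ≠ 0) (hR : IsUnit (s • 1 - TL * A * T)) :
    (s • 1 - A)⁻¹ = s⁻¹ • Q + T * (s • 1 - TL * A * T)⁻¹ * TL := by
  have hAT : A * T = T * (TL * A * T) := by
    calc A * T = (T * TL + Q) * A * T := by rw [hsplit, Matrix.one_mul]
      _ = T * (TL * A * T) := by
        rw [Matrix.add_mul, hQA, add_zero]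
        simp only [Matrix.mul_assoc]
  have hintertwine : (s • 1 - A) * T = T * (s • 1 - TL * A * T) := by
    rw [Matrix.sub_mul, Matrix.mul_sub, hAT, Matrix.smul_mul, Matrix.mul_smul, Matrix.one_mul,
      Matrix.mul_one]
  apply Matrix.inv_eq_right_inv
  rw [Matrix.mul_add, Matrix.mul_smul, Matrix.sub_mul, hAQ, sub_zero, Matrix.smul_mul,
    Matrix.one_mul, smul_smul, inv_mul_cancel₀ hs, one_smul, ← Matrix.mul_assoc,
    ← Matrix.mul_assoc, hintertwine, Matrix.mul_assoc T,
    Matrix.mul_nonsing_inv _ ((Matrix.isUnit_iff_isUnit_det _).mp hR), Matrix.mul_one,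
    add_comm, hsplit]

theorem transfer_eq_reduced_of_mul_add_eq_one {p q : Type*} [Fintype p] [Fintype q]
    (C : Matrix q n K) (B : Matrix n p K) (hsplit : T * TL + Q = 1) (hAQ : A * Q = 0)
    (hQA : Q * A = 0) (hCQB : C * Q * B = 0) {s : K} (hs : s ≠ 0)
    (hR : IsUnit (s • 1 - TL * A * T)) :
    C * (s • 1 - A)⁻¹ * B = C * T * (s • 1 - TL * A * T)⁻¹ * (TL * B) := by
  rw [resolvent_eq_of_mul_add_eq_one hsplit hAQ hQA hs hR, Matrix.mul_add, Matrix.add_mul,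
    Matrix.mul_smul, Matrix.smul_mul, hCQB, smul_zero, zero_add]
  simp only [Matrix.mul_assoc]

end Resolvent

theorem map_transfer_eq_reduced_of_mul_add_eq_one {R K : Type*} [CommRing R] [Field K]
    (f : R →+* K) {n m p q : Type*} [Fintype n] [DecidableEq n] [Fintype m] [DecidableEq m]
    [Fintype p] [Fintype q] {A Q : Matrix n n R} {T : Matrix n m R} {TL : Matrix m n R}
    (C : Matrix q n R) (B : Matrix n p R) (hsplit : T * TL + Q = 1) (hAQ : A * Q = 0)
    (hQA : Q * A = 0) (hCQB : C * Q * B = 0) {s : K} (hs : s ≠ 0)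
    (hR : IsUnit (s • 1 - (TL * A * T).map f)) :
    C.map f * (s • 1 - A.map f)⁻¹ * B.map f =
      (C * T).map f * (s • 1 - (TL * A * T).map f)⁻¹ * (TL * B).map f := by
  simp only [Matrix.map_mul] at hR ⊢
  refine transfer_eq_reduced_of_mul_add_eq_one (Q := Q.map f) _ _ ?_ ?_ ?_ ?_ hs hR
  · simpa [Matrix.map_mul, Matrix.map_add] using congrArg (Matrix.map · f) hsplit
  · simpa [Matrix.map_mul] using congrArg (Matrix.map · f) hAQ
  · simpa [Matrix.map_mul] using congrArg (Matrix.map · f) hQA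
  · simpa [Matrix.map_mul] using congrArg (Matrix.map · f) hCQB

section Sn

variable (k : ℕ)

@[simp] theorem Sn_last (j : Fin k) : Sn k (Fin.last k) j = 1 := by
  simp [Sn]

@[simp] theorem Sn_castSucc (i j : Fin k) :
    Sn k i.castSucc j = -(1 : Matrix (Fin k) (Fin k) ℝ) i j := by
  simp only [Sn, Matrix.of_apply, Fin.val_castSucc, i.isLt.ne, if_false, Fin.val_eq_val,
    Matrix.one_apply]
  split_ifs <;> simp

theorem mul_Sn_apply {ι : Type*} (Y : Matrix ι (Fin (k + 1)) ℝ) (i : ι) (j : Fin k) :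
    (Y * Sn k) i j = Y i (Fin.last k) - Y i j.castSucc := by
  simp [Matrix.mul_apply, Fin.sum_univ_castSucc, Matrix.one_apply, sub_eq_neg_add]

theorem Sn_mulVec_castSucc (x : Fin k → ℝ) (i : Fin k) : (Sn k *ᵥ x) i.castSucc = -x i := by
  simp [mulVec, dotProduct, Matrix.one_apply]

theorem Sn_mulVec_injective : Function.Injective (Sn k).mulVec := fun x y h => by
  funext i
  simpa [Sn_mulVec_castSucc] using congrFun h i.castSucc

theorem onesCol_transpose_mul_Sn : (onesCol (k + 1))ᵀ * Sn k = 0 := by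
  ext i j
  simp [mul_Sn_apply, onesCol]

theorem Sn_transpose_mul_onesCol : (Sn k)ᵀ * onesCol (k + 1) = 0 := by
  rw [← transpose_transpose (onesCol (k + 1)), ← transpose_mul, onesCol_transpose_mul_Sn,
    transpose_zero]

theorem eq_mul_onesCol_transpose_of_mul_Sn_eq_zero {ι : Type*} {Y : Matrix ι (Fin (k + 1)) ℝ}
    (h : Y * Sn k = 0) :
    Y = Matrix.of (fun i (_ : Fin 1) => Y i (Fin.last k)) * (onesCol (k + 1))ᵀ := by
  ext i j
  induction j using Fin.lastCases with
  | last => simp [Matrix.mul_apply, onesCol]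
  | cast j =>
    have := congrFun (congrFun h i) j
    rw [mul_Sn_apply, Matrix.zero_apply, sub_eq_zero] at this
    simp [Matrix.mul_apply, onesCol, this]

end Sn

section Projection

variable {k : ℕ}

theorem onesCol_transpose_mul_mul_onesCol {E : Matrix (Fin k) (Fin k) ℝ} (hE : E.IsDiag) :
    (onesCol k)ᵀ * (E * onesCol k) = E.trace • 1 := by
  ext i j
  rw [hE.diagonal_diag.symm]
  simp [Matrix.mul_apply, onesCol, Matrix.trace, Matrix.diagonal_apply, Subsingleton.elim i j]

variable {E : Matrix (Fin (k + 1)) (Fin (k + 1)) ℝ}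

theorem posDef_Sn_transpose_mul_inv_mul_Sn (hE : E.PosDef) :
    ((Sn k)ᵀ * E⁻¹ * Sn k).PosDef := by
  simpa using hE.inv.conjTranspose_mul_mul_same (Sn_mulVec_injective k)

theorem SnL_mul_Sn (hE : E.PosDef) : SnL k E * Sn k = 1 := by
  rw [SnL, Matrix.mul_assoc, Matrix.mul_assoc, ← Matrix.mul_assoc (Sn k)ᵀ,
    Matrix.nonsing_inv_mul _
      ((isUnit_iff_isUnit_det _).mp (posDef_Sn_transpose_mul_inv_mul_Sn hE).isUnit)]

theorem SnL_mul_mul_onesCol (hE : IsUnit E.det) : SnL k E * E * onesCol (k + 1) = 0 := by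
  rw [SnL, Matrix.mul_assoc _ E⁻¹, Matrix.nonsing_inv_mul _ hE, Matrix.mul_one,
    Matrix.mul_assoc, Sn_transpose_mul_onesCol, Matrix.mul_zero]

-- Both sides agree on the columns of `Sn k` and on `E 1`, which together span `ℝ^(k+1)`.
theorem Sn_mul_SnL_add_smul_eq_one (hdiag : E.IsDiag) (hpd : E.PosDef) :
    Sn k * SnL k E + (E.trace)⁻¹ • (E * onesCol (k + 1) * (onesCol (k + 1))ᵀ) = 1 := by
  have hEu : IsUnit E.det := (isUnit_iff_isUnit_det E).mp hpd.isUnit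
  set X := Sn k * SnL k E + (E.trace)⁻¹ • (E * onesCol (k + 1) * (onesCol (k + 1))ᵀ) - 1
    with hXdef
  have hXS : X * Sn k = 0 := by
    simp only [hXdef, Matrix.sub_mul, Matrix.add_mul, Matrix.smul_mul, Matrix.mul_assoc,
      SnL_mul_Sn hpd, onesCol_transpose_mul_Sn, Matrix.mul_zero, smul_zero, Matrix.mul_one,
      Matrix.one_mul, add_zero, sub_self]
  have hXE : X * (E * onesCol (k + 1)) = 0 := by
    simp only [hXdef, Matrix.sub_mul, Matrix.add_mul, Matrix.smul_mul, Matrix.mul_assoc,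
      ← Matrix.mul_assoc (SnL k E), SnL_mul_mul_onesCol hEu,
      onesCol_transpose_mul_mul_onesCol hdiag,
      Matrix.mul_zero, Matrix.mul_smul, Matrix.mul_one, smul_smul,
      inv_mul_cancel₀ hpd.trace_pos.ne', one_smul, Matrix.one_mul, zero_add, sub_self]
  have hX := eq_mul_onesCol_transpose_of_mul_Sn_eq_zero k hXS
  rw [hX, Matrix.mul_assoc, onesCol_transpose_mul_mul_onesCol hdiag, Matrix.mul_smul,
    Matrix.mul_one, smul_eq_zero] at hXE
  rw [← sub_eq_zero, ← hXdef, hX, hXE.resolve_left hpd.trace_pos.ne', Matrix.zero_mul]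

end Projection

-- The projection onto `span 1` along `ker (1ᵀ E)`.
noncomputable def consensusProj {k : ℕ} (E : Matrix (Fin k) (Fin k) ℝ) :
    Matrix (Fin k) (Fin k) ℝ :=
  (E.trace)⁻¹ • (onesCol k * (onesCol k)ᵀ * E)

section ConsensusProj

variable {k : ℕ}

theorem mul_consensusProj_eq_zero {ι : Type*} {M : Matrix ι (Fin k) ℝ}
    (E : Matrix (Fin k) (Fin k) ℝ) (h : M * onesCol k = 0) : M * consensusProj E = 0 := by
  rw [consensusProj, Matrix.mul_smul, ← Matrix.mul_assoc, ← Matrix.mul_assoc, h,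
    Matrix.zero_mul, Matrix.zero_mul, smul_zero]

theorem consensusProj_mul_eq_zero {ι : Type*} {E : Matrix (Fin k) (Fin k) ℝ}
    {M : Matrix (Fin k) ι ℝ} (h : (onesCol k)ᵀ * E * M = 0) : consensusProj E * M = 0 := by
  rw [consensusProj, Matrix.smul_mul, Matrix.mul_assoc, Matrix.mul_assoc, ← Matrix.mul_assoc _ E,
    h, Matrix.mul_zero, smul_zero]

theorem consensusProj_mul_inv {E : Matrix (Fin k) (Fin k) ℝ} (hE : IsUnit E.det) :
    consensusProj E * E⁻¹ = (E.trace)⁻¹ • (onesCol k * (onesCol k)ᵀ) := by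
  rw [consensusProj, Matrix.smul_mul, Matrix.mul_assoc, Matrix.mul_nonsing_inv _ hE,
    Matrix.mul_one]

theorem neg_inv_mul_mul_consensusProj {E L : Matrix (Fin k) (Fin k) ℝ}
    (hL1 : L * onesCol k = 0) : -(E⁻¹ * L) * consensusProj E = 0 :=
  mul_consensusProj_eq_zero E (by rw [Matrix.neg_mul, Matrix.mul_assoc, hL1, Matrix.mul_zero,
    neg_zero])

theorem consensusProj_mul_neg_inv_mul {E L : Matrix (Fin k) (Fin k) ℝ} (hE : IsUnit E.det)
    (h1L : (onesCol k)ᵀ * L = 0) : consensusProj E * -(E⁻¹ * L) = 0 :=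
  consensusProj_mul_eq_zero (by rw [Matrix.mul_neg, Matrix.mul_assoc,
    mul_nonsing_inv_cancel_left _ _ hE, h1L, neg_zero])

theorem inv_mul_Sn_mul_SnL_mul_add_consensusProj {E : Matrix (Fin (k + 1)) (Fin (k + 1)) ℝ}
    (hdiag : E.IsDiag) (hpd : E.PosDef) :
    E⁻¹ * Sn k * (SnL k E * E) + consensusProj E = 1 := by
  have hEu : IsUnit E.det := (isUnit_iff_isUnit_det E).mp hpd.isUnit
  calc E⁻¹ * Sn k * (SnL k E * E) + consensusProj E
      = E⁻¹ * (Sn k * SnL k E + (E.trace)⁻¹ • (E * onesCol (k + 1) * (onesCol (k + 1))ᵀ)) *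
          E := by
        rw [consensusProj, Matrix.mul_add, Matrix.add_mul, Matrix.mul_smul, Matrix.smul_mul,
          ← Matrix.mul_assoc E⁻¹ (E * _), ← Matrix.mul_assoc E⁻¹ E,
          Matrix.nonsing_inv_mul _ hEu, Matrix.one_mul]
        simp only [Matrix.mul_assoc]
    _ = 1 := by
      rw [Sn_mul_SnL_add_smul_eq_one hdiag hpd, Matrix.mul_one, Matrix.nonsing_inv_mul _ hEu]

end ConsensusProj

section ErrorSystem

variable {a b : ℕ} (E : Matrix (Fin (a + 1)) (Fin (a + 1)) ℝ)
  (Eh : Matrix (Fin (b + 1)) (Fin (b + 1)) ℝ)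

-- Every state splits as `x = errorLift (errorRestrict x) + errorConsensusProj x`: disagreement
-- coordinates in `Fin a ⊕ Fin b` plus the consensus components of the two networks.
noncomputable def errorLift : Matrix (Fin (a + 1) ⊕ Fin (b + 1)) (Fin a ⊕ Fin b) ℝ :=
  fromBlocks (E⁻¹ * Sn a) 0 0 (Eh⁻¹ * Sn b)

noncomputable def errorRestrict : Matrix (Fin a ⊕ Fin b) (Fin (a + 1) ⊕ Fin (b + 1)) ℝ :=
  fromBlocks (SnL a E * E) 0 0 (SnL b Eh * Eh)

noncomputable def errorConsensusProj :
    Matrix (Fin (a + 1) ⊕ Fin (b + 1)) (Fin (a + 1) ⊕ Fin (b + 1)) ℝ :=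
  fromBlocks (consensusProj E) 0 0 (consensusProj Eh)

variable {E Eh}

theorem errorLift_mul_errorRestrict_add_errorConsensusProj (hEdiag : E.IsDiag) (hEpd : E.PosDef)
    (hEhdiag : Eh.IsDiag) (hEhpd : Eh.PosDef) :
    errorLift E Eh * errorRestrict E Eh + errorConsensusProj E Eh = 1 := by
  simp [errorLift, errorRestrict, errorConsensusProj, fromBlocks_multiply, fromBlocks_add,
    ← fromBlocks_one, inv_mul_Sn_mul_SnL_mul_add_consensusProj hEdiag hEpd,
    inv_mul_Sn_mul_SnL_mul_add_consensusProj hEhdiag hEhpd]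

theorem fromBlocks_neg_inv_mul_mul_errorConsensusProj {L : Matrix (Fin (a + 1)) (Fin (a + 1)) ℝ}
    {Lh : Matrix (Fin (b + 1)) (Fin (b + 1)) ℝ} (hL1 : L * onesCol (a + 1) = 0)
    (hLh1 : Lh * onesCol (b + 1) = 0) :
    fromBlocks (-(E⁻¹ * L)) 0 0 (-(Eh⁻¹ * Lh)) * errorConsensusProj E Eh = 0 := by
  simp [errorConsensusProj, fromBlocks_multiply, neg_inv_mul_mul_consensusProj hL1,
    neg_inv_mul_mul_consensusProj hLh1]

theorem errorConsensusProj_mul_fromBlocks_neg_inv_mul {L : Matrix (Fin (a + 1)) (Fin (a + 1)) ℝ}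
    {Lh : Matrix (Fin (b + 1)) (Fin (b + 1)) ℝ} (hE : IsUnit E.det) (hEh : IsUnit Eh.det)
    (h1L : (onesCol (a + 1))ᵀ * L = 0) (h1Lh : (onesCol (b + 1))ᵀ * Lh = 0) :
    errorConsensusProj E Eh * fromBlocks (-(E⁻¹ * L)) 0 0 (-(Eh⁻¹ * Lh)) = 0 := by
  simp [errorConsensusProj, fromBlocks_multiply, consensusProj_mul_neg_inv_mul hE h1L,
    consensusProj_mul_neg_inv_mul hEh h1Lh]

theorem errorRestrict_mul_fromBlocks_mul_errorLift (hE : IsUnit E.det) (hEh : IsUnit Eh.det)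
    (L : Matrix (Fin (a + 1)) (Fin (a + 1)) ℝ) (Lh : Matrix (Fin (b + 1)) (Fin (b + 1)) ℝ) :
    errorRestrict E Eh * fromBlocks (-(E⁻¹ * L)) 0 0 (-(Eh⁻¹ * Lh)) * errorLift E Eh =
      fromBlocks (-(SnL a E * L * E⁻¹ * Sn a)) 0 0 (-(SnL b Eh * Lh * Eh⁻¹ * Sn b)) := by
  simp [errorRestrict, errorLift, fromBlocks_multiply, Matrix.mul_assoc,
    mul_nonsing_inv_cancel_left _ _ hE, mul_nonsing_inv_cancel_left _ _ hEh]

theorem fromCols_mul_errorLift {q : Type*} (H₁ : Matrix q (Fin (a + 1)) ℝ)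
    (H₂ : Matrix q (Fin (b + 1)) ℝ) (c : ℝ) :
    fromCols H₁ (c • H₂) * errorLift E Eh =
      fromCols (H₁ * E⁻¹ * Sn a) (c • (H₂ * Eh⁻¹ * Sn b)) := by
  simp [errorLift, fromCols_mul_fromBlocks, Matrix.mul_assoc]

theorem errorRestrict_mul_fromRows {p : Type*} (hE : IsUnit E.det) (hEh : IsUnit Eh.det)
    (F₁ : Matrix (Fin (a + 1)) p ℝ) (F₂ : Matrix (Fin (b + 1)) p ℝ) (c : ℝ) :
    errorRestrict E Eh * fromRows (E⁻¹ * F₁) (c • (Eh⁻¹ * F₂)) =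
      fromRows (SnL a E * F₁) (c • (SnL b Eh * F₂)) := by
  simp [errorRestrict, fromBlocks_mul_fromRows, Matrix.mul_assoc,
    mul_nonsing_inv_cancel_left _ _ hE, mul_nonsing_inv_cancel_left _ _ hEh]

-- `C_e Q B_e` is the residue at `s = 0` of the error transfer function.
theorem errorSystem_residue_eq_zero {p q : ℕ} (hE : IsUnit E.det) (hEh : IsUnit Eh.det)
    (htr : Eh.trace ≠ 0) (F : Matrix (Fin (a + 1)) (Fin p) ℝ)
    (H : Matrix (Fin q) (Fin (a + 1)) ℝ)
    {P : Matrix (Fin (a + 1)) (Fin (b + 1)) ℝ} (hP : P * onesCol (b + 1) = onesCol (a + 1))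
    {al be : ℝ} (hab : al * be = Eh.trace / E.trace) :
    fromCols H ((-al) • (H * P)) * errorConsensusProj E Eh *
      fromRows (E⁻¹ * F) (be • (Eh⁻¹ * (Pᵀ * F))) = 0 := by
  set J := H * onesCol (a + 1) * (onesCol (a + 1))ᵀ * F
  have hfull : H * consensusProj E * (E⁻¹ * F) = (E.trace)⁻¹ • J := by
    rw [Matrix.mul_assoc H, ← Matrix.mul_assoc _ E⁻¹, consensusProj_mul_inv hE]
    simp only [J, Matrix.mul_smul, Matrix.smul_mul, Matrix.mul_assoc]
  have hreduced : H * P * consensusProj Eh * (Eh⁻¹ * (Pᵀ * F)) = (Eh.trace)⁻¹ • J := by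
    have hPT : (onesCol (b + 1))ᵀ * Pᵀ = (onesCol (a + 1))ᵀ := by rw [← transpose_mul, hP]
    rw [Matrix.mul_assoc (H * P), ← Matrix.mul_assoc _ Eh⁻¹, consensusProj_mul_inv hEh]
    simp only [J, Matrix.mul_smul, Matrix.smul_mul, Matrix.mul_assoc]
    rw [← Matrix.mul_assoc (onesCol (b + 1))ᵀ, hPT, ← Matrix.mul_assoc P, hP]
  have hcoeff : (E.trace)⁻¹ + be * (-al * (Eh.trace)⁻¹) = 0 := by
    linear_combination (-(Eh.trace)⁻¹) * hab - (E.trace)⁻¹ * mul_inv_cancel₀ htr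
  rw [errorConsensusProj, fromCols_mul_fromBlocks, fromCols_mul_fromRows]
  simp only [Matrix.mul_zero, add_zero, zero_add, Matrix.smul_mul, Matrix.mul_smul, hfull,
    hreduced, smul_smul, ← add_smul]
  rw [hcoeff, zero_smul]

end ErrorSystem

theorem error_transfer_function_pole_cancellation_general (a b p q : ℕ)
    (E : Matrix (Fin (a + 1)) (Fin (a + 1)) ℝ) (hEdiag : E.IsDiag) (hEpd : E.PosDef)
    (Eh : Matrix (Fin (b + 1)) (Fin (b + 1)) ℝ) (hEhdiag : Eh.IsDiag) (hEhpd : Eh.PosDef)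
    (L : Matrix (Fin (a + 1)) (Fin (a + 1)) ℝ)
    (hL1 : L * onesCol (a + 1) = 0) (h1L : (onesCol (a + 1))ᵀ * L = 0)
    (Lh : Matrix (Fin (b + 1)) (Fin (b + 1)) ℝ)
    (hLh1 : Lh * onesCol (b + 1) = 0) (h1Lh : (onesCol (b + 1))ᵀ * Lh = 0)
    (F : Matrix (Fin (a + 1)) (Fin p) ℝ) (H : Matrix (Fin q) (Fin (a + 1)) ℝ)
    (P : Matrix (Fin (a + 1)) (Fin (b + 1)) ℝ)
    (hP : P * onesCol (b + 1) = onesCol (a + 1))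
    (al be : ℝ) (hab : al * be = Eh.trace / E.trace)
    (s : ℂ) (hs : s ≠ 0)
    (hinv : IsUnit (s • (1 : Matrix (Fin a ⊕ Fin b) (Fin a ⊕ Fin b) ℂ) -
      cmap (fromBlocks (-(SnL a E * L * E⁻¹ * Sn a)) 0 0 (-(SnL b Eh * Lh * Eh⁻¹ * Sn b))))) :
    cmap (fromCols H ((-al) • (H * P))) *
        (s • (1 : Matrix (Fin (a + 1) ⊕ Fin (b + 1)) (Fin (a + 1) ⊕ Fin (b + 1)) ℂ) -
          cmap (fromBlocks (-(E⁻¹ * L)) 0 0 (-(Eh⁻¹ * Lh))))⁻¹ *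
        cmap (fromRows (E⁻¹ * F) (be • (Eh⁻¹ * (Pᵀ * F)))) =
      cmap (fromCols (H * E⁻¹ * Sn a) ((-al) • ((H * P) * Eh⁻¹ * Sn b))) *
        (s • (1 : Matrix (Fin a ⊕ Fin b) (Fin a ⊕ Fin b) ℂ) -
          cmap (fromBlocks (-(SnL a E * L * E⁻¹ * Sn a)) 0 0
            (-(SnL b Eh * Lh * Eh⁻¹ * Sn b))))⁻¹ *
        cmap (fromRows (SnL a E * F) (be • (SnL b Eh * (Pᵀ * F)))) := by
  have hEu : IsUnit E.det := (isUnit_iff_isUnit_det E).mp hEpd.isUnit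
  have hEhu : IsUnit Eh.det := (isUnit_iff_isUnit_det Eh).mp hEhpd.isUnit
  have hreduce := errorRestrict_mul_fromBlocks_mul_errorLift hEu hEhu L Lh
  have key := map_transfer_eq_reduced_of_mul_add_eq_one Complex.ofRealHom _ _
    (errorLift_mul_errorRestrict_add_errorConsensusProj hEdiag hEpd hEhdiag hEhpd)
    (fromBlocks_neg_inv_mul_mul_errorConsensusProj hL1 hLh1)
    (errorConsensusProj_mul_fromBlocks_neg_inv_mul hEu hEhu h1L h1Lh)
    (errorSystem_residue_eq_zero hEu hEhu hEhpd.trace_pos.ne' F H hP hab) hs (hreduce ▸ hinv)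
  rwa [hreduce, fromCols_mul_errorLift, errorRestrict_mul_fromRows hEu hEhu] at key

/-- Lemma 1, matrix form: if `αβ = trace(Ê)/trace(E)` then for every `s ≠ 0`
with `sI − Ā_e` invertible,
`C_e (sI − A_e)⁻¹ B_e = C̄_e (sI − Ā_e)⁻¹ B̄_e`: the pole of the error transfer
function at `s = 0` cancels. Here `n = a+1`, `r = b+1`, `F̂ = Pᵀ F`, `Ĥ = H P`. -/
theorem error_transfer_function_pole_cancellation (a b p q : ℕ)
    (ha : 1 ≤ a) (hb : 1 ≤ b) (hp : 1 ≤ p) (hq : 1 ≤ q)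
    (E : Matrix (Fin (a + 1)) (Fin (a + 1)) ℝ) (hEdiag : E.IsDiag) (hEpd : E.PosDef)
    (Eh : Matrix (Fin (b + 1)) (Fin (b + 1)) ℝ) (hEhdiag : Eh.IsDiag) (hEhpd : Eh.PosDef)
    (L : Matrix (Fin (a + 1)) (Fin (a + 1)) ℝ)
    (hL1 : L * onesCol (a + 1) = 0) (h1L : (onesCol (a + 1))ᵀ * L = 0)
    (Lh : Matrix (Fin (b + 1)) (Fin (b + 1)) ℝ)
    (hLh1 : Lh * onesCol (b + 1) = 0) (h1Lh : (onesCol (b + 1))ᵀ * Lh = 0)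
    (F : Matrix (Fin (a + 1)) (Fin p) ℝ) (H : Matrix (Fin q) (Fin (a + 1)) ℝ)
    (P : Matrix (Fin (a + 1)) (Fin (b + 1)) ℝ)
    (hP : P * onesCol (b + 1) = onesCol (a + 1))
    (al be : ℝ) (hab : al * be = Eh.trace / E.trace)
    (s : ℂ) (hs : s ≠ 0)
    (hinv : IsUnit (s • (1 : Matrix (Fin a ⊕ Fin b) (Fin a ⊕ Fin b) ℂ) -
      cmap (fromBlocks (-(SnL a E * L * E⁻¹ * Sn a)) 0 0 (-(SnL b Eh * Lh * Eh⁻¹ * Sn b))))) :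
    cmap (fromCols H ((-al) • (H * P))) *
        (s • (1 : Matrix (Fin (a + 1) ⊕ Fin (b + 1)) (Fin (a + 1) ⊕ Fin (b + 1)) ℂ) -
          cmap (fromBlocks (-(E⁻¹ * L)) 0 0 (-(Eh⁻¹ * Lh))))⁻¹ *
        cmap (fromRows (E⁻¹ * F) (be • (Eh⁻¹ * (Pᵀ * F)))) =
      cmap (fromCols (H * E⁻¹ * Sn a) ((-al) • ((H * P) * Eh⁻¹ * Sn b))) *
        (s • (1 : Matrix (Fin a ⊕ Fin b) (Fin a ⊕ Fin b) ℂ) -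
          cmap (fromBlocks (-(SnL a E * L * E⁻¹ * Sn a)) 0 0
            (-(SnL b Eh * Lh * Eh⁻¹ * Sn b))))⁻¹ *
        cmap (fromRows (SnL a E * F) (be • (SnL b Eh * (Pᵀ * F)))) :=
  error_transfer_function_pole_cancellation_general a b p q E hEdiag hEpd Eh hEhdiag hEhpd L hL1 h1L
    Lh hLh1 h1Lh F H P hP al be hab s hs hinv
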